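/- arXiv:math/0502202 — 3 statements merged into one kernel-verified Lean document; each statement's English description precedes it below -/
import Mathlib

section
/- Let the digit sequence z be periodic with period p, let D ∈ ℂ be the displacement of the path over one period, and let t be the net turn over one period modulo 6. If t ≡ 0 (mod 6) and D ≠ 0, then the path is unbounded: the position after kp steps equals k·D, so its distance from the start tends to infinity. -/
open Finset

noncomputable def ω : ℂ := Complex.exp (Real.pi * Complex.I / 3)

def dir (d0 : ℤ) (z : ℕ → Fin 2) : ℕ → ℤ
  | 0 => d0
  | n + 1 => dir d0 z n + (if z n = 0 then 1 else -1)

noncomputable def pos (d0 : ℤ) (z : ℕ → Fin 2) : ℕ → ℂ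
  | 0 => 0
  | n + 1 => pos d0 z n + ω ^ dir d0 z (n + 1)

/-! A period of the digits shifts the direction by the net turn `t`; when `6 ∣ t` the step
`ω ^ dir` is therefore periodic too, so every period adds the same displacement `D` and the
position after `k` periods is `k * D`. -/

theorem isPrimitiveRoot_omega : IsPrimitiveRoot ω 6 := by
  unfold ω
  convert Complex.isPrimitiveRoot_exp 6 (by norm_num) using 2
  push_cast
  ring

theorem omega_zpow_eq_one_iff (t : ℤ) : ω ^ t = 1 ↔ 6 ∣ t := by
  exact_mod_cast isPrimitiveRoot_omega.zpow_eq_one_iff_dvd t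

theorem dir_sub_eq_card_sub_card (d0 : ℤ) (z : ℕ → Fin 2) (n : ℕ) :
    dir d0 z n - d0 = (((range n).filter (fun j => z j = 0)).card : ℤ)
      - (((range n).filter (fun j => z j = 1)).card : ℤ) := by
  induction n with
  | zero => simp [dir]
  | succ n ih =>
    rw [dir, range_add_one, filter_insert, filter_insert]
    obtain h | h : z n = 0 ∨ z n = 1 := by omega
    all_goals simp [h]; linarith

section Periodic

variable {d0 : ℤ} {z : ℕ → Fin 2} {p : ℕ}

theorem dir_add_period (hper : ∀ j, z (j + p) = z j) (n : ℕ) :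
    dir d0 z (n + p) = dir d0 z n + (dir d0 z p - d0) := by
  induction n with
  | zero => simp [dir]
  | succ n ih =>
    rw [Nat.add_right_comm, dir, ih, hper, dir]
    ring

theorem pos_add_period (hper : ∀ j, z (j + p) = z j) (hturn : ω ^ (dir d0 z p - d0) = 1)
    (n : ℕ) : pos d0 z (n + p) = pos d0 z n + pos d0 z p := by
  induction n with
  | zero => simp [pos]
  | succ n ih =>
    rw [Nat.add_right_comm, pos, ih, ← Nat.add_right_comm, dir_add_period hper,
      zpow_add₀ (isPrimitiveRoot_omega.ne_zero (by norm_num)), hturn, mul_one, pos]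
    ring

theorem pos_mul_period (hper : ∀ j, z (j + p) = z j) (hturn : ω ^ (dir d0 z p - d0) = 1)
    (k : ℕ) : pos d0 z (k * p) = k * pos d0 z p := by
  induction k with
  | zero => simp [pos]
  | succ k ih =>
    rw [Nat.succ_mul, pos_add_period hper hturn, ih]
    push_cast
    ring

end Periodic

theorem periodic_zero_turn_unbounded_general (d0 : ℤ) (z : ℕ → Fin 2) (p : ℕ)
    (hper : ∀ j, z (j + p) = z j)
    (t : ℤ)
    (ht : t = (((Finset.range p).filter (fun j => z j = 0)).card : ℤ)
            - (((Finset.range p).filter (fun j => z j = 1)).card : ℤ))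
    (hdvd : (6 : ℤ) ∣ t)
    (D : ℂ) (hD : D = pos d0 z p) (hD0 : D ≠ 0) :
    (∀ k : ℕ, pos d0 z (k * p) = (k : ℂ) * D) ∧
    Filter.Tendsto (fun k : ℕ => ‖pos d0 z (k * p)‖) Filter.atTop Filter.atTop := by
  have hturn : ω ^ (dir d0 z p - d0) = 1 := by
    rwa [omega_zpow_eq_one_iff, dir_sub_eq_card_sub_card, ← ht]
  have hmul : ∀ k : ℕ, pos d0 z (k * p) = (k : ℂ) * D := fun k => by
    rw [pos_mul_period hper hturn, hD]
  refine ⟨hmul, ?_⟩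
  simp only [hmul, norm_mul, Complex.norm_natCast]
  exact tendsto_natCast_atTop_atTop.atTop_mul_const (norm_pos_iff.mpr hD0)

theorem periodic_zero_turn_unbounded (d0 : ℤ) (z : ℕ → Fin 2) (p : ℕ) (hp : 0 < p)
    (hper : ∀ j, z (j + p) = z j)
    (t : ℤ)
    (ht : t = (((Finset.range p).filter (fun j => z j = 0)).card : ℤ)
            - (((Finset.range p).filter (fun j => z j = 1)).card : ℤ))
    (hdvd : (6 : ℤ) ∣ t)
    (D : ℂ) (hD : D = pos d0 z p) (hD0 : D ≠ 0) :
    (∀ k : ℕ, pos d0 z (k * p) = (k : ℂ) * D) ∧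
    Filter.Tendsto (fun k : ℕ => ‖pos d0 z (k * p)‖) Filter.atTop Filter.atTop :=
  periodic_zero_turn_unbounded_general d0 z p hper t ht hdvd D hD hD0
end

section
/- The path of r = 0.110110…₂ = 6/7 (periodic digit sequence with period '110') is bounded and eventually periodic: the net turn over one period is −1 (mod 6), the path closes after 6 periods (18 steps), and the set of lattice points visited by the infinite path is finite, of cardinality at most 18. -/
/-!
If the turn sequence `z` is `q`-periodic, shifting the path by one period rotates every later
step by `ω ^ τ`, where `τ` is the net turn over a period; hence
`pos (n + q) = pos q + ω ^ τ * pos n` and `pos (k * q) = pos q * ∑ i < k, (ω ^ τ) ^ i`.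
For `6/7` the period is `110` and `τ = -1`, so `ω ^ τ = ω⁻¹` is a primitive sixth root of unity:
the geometric sum vanishes at `k = 6` and `ω ^ (6 * τ) = 1`, making the path `18`-periodic.
-/

open Finset

theorem Function.Periodic.range_eq_image_Iio {α : Type*} {f : ℕ → α} {q : ℕ}
    (hf : Function.Periodic f q) (hq : 0 < q) : Set.range f = f '' Set.Iio q := by
  refine subset_antisymm ?_ (Set.image_subset_range f _)
  rintro _ ⟨n, rfl⟩
  exact ⟨n % q, Nat.mod_lt n hq, hf.map_mod_nat n⟩

section PeriodicTurns

variable {d0 : ℤ} {z : ℕ → Fin 2} {q : ℕ}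

theorem dir_add_of_periodic (hz : Function.Periodic z q) (n : ℕ) :
    dir d0 z (n + q) = dir d0 z n + (dir d0 z q - d0) := by
  induction n with
  | zero => simp [dir]
  | succ n ih =>
    rw [Nat.add_right_comm, dir, dir, ih, hz n]
    ring

theorem dir_mul_of_periodic (hz : Function.Periodic z q) (k : ℕ) :
    dir d0 z (k * q) = d0 + k * (dir d0 z q - d0) := by
  induction k with
  | zero => simp [dir]
  | succ k ih =>
    rw [Nat.succ_mul, dir_add_of_periodic hz, ih]
    push_cast
    ring

theorem pos_add_of_periodic (hz : Function.Periodic z q) (n : ℕ) :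
    pos d0 z (n + q) = pos d0 z q + ω ^ (dir d0 z q - d0) * pos d0 z n := by
  induction n with
  | zero => simp [pos]
  | succ n ih =>
    rw [Nat.add_right_comm, pos, pos, ih, Nat.add_right_comm, dir_add_of_periodic hz,
      zpow_add₀ (isPrimitiveRoot_omega.ne_zero (by norm_num))]
    ring

theorem pos_mul_of_periodic (hz : Function.Periodic z q) (k : ℕ) :
    pos d0 z (k * q) = pos d0 z q * ∑ i ∈ range k, (ω ^ (dir d0 z q - d0)) ^ i := by
  induction k with
  | zero => simp [pos]
  | succ k ih =>
    rw [Nat.succ_mul, pos_add_of_periodic hz, ih, geom_sum_succ]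
    ring

theorem periodic_pos_of_net_turn_eq_neg_one (hz : Function.Periodic z q)
    (hturn : dir d0 z q - d0 = -1) : Function.Periodic (pos d0 z) (6 * q) := by
  have hpos : pos d0 z (6 * q) = 0 := by
    rw [pos_mul_of_periodic hz, hturn, zpow_neg_one,
      isPrimitiveRoot_omega.inv.geom_sum_eq_zero (by norm_num), mul_zero]
  have hdir : dir d0 z (6 * q) - d0 = -6 := by
    rw [dir_mul_of_periodic hz, hturn]
    ring
  have hz6 : Function.Periodic z (6 * q) := by simpa using hz.nat_mul 6
  intro n
  rw [pos_add_of_periodic hz6, hpos, hdir]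
  simp [isPrimitiveRoot_omega.pow_eq_one]

end PeriodicTurns

theorem path_of_six_sevenths_bounded
    (z : ℕ → Fin 2) (hz : ∀ j, z j = if j % 3 = 2 then 0 else 1) :
    ((((Finset.range 3).filter (fun j => z j = 0)).card : ℤ)
      - (((Finset.range 3).filter (fun j => z j = 1)).card : ℤ) = -1) ∧
    (∀ n : ℕ, pos 0 z (n + 18) = pos 0 z n) ∧
    (∃ M : ℝ, ∀ n : ℕ, ‖pos 0 z n‖ < M) ∧
    (Set.range (pos 0 z)).Finite ∧ (Set.range (pos 0 z)).ncard ≤ 18 := by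
  have hz3 : Function.Periodic z 3 := fun n => by simp [hz]
  have hturn : dir 0 z 3 - 0 = -1 := by simp [dir, hz]
  have hper : Function.Periodic (pos 0 z) 18 := periodic_pos_of_net_turn_eq_neg_one hz3 hturn
  have hrange := hper.range_eq_image_Iio (by norm_num)
  have hfin : (Set.range (pos 0 z)).Finite := hrange ▸ (Set.finite_Iio 18).image _
  refine ⟨by simp [hz]; decide, hper, ?_, hfin, ?_⟩
  · obtain ⟨C, hC⟩ := isBounded_iff_forall_norm_le.mp hfin.isBounded
    exact ⟨C + 1, fun n => (hC _ ⟨n, rfl⟩).trans_lt (lt_add_one C)⟩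
  · rw [hrange]
    exact (Set.ncard_image_le (Set.finite_Iio 18)).trans (Set.ncard_Iio_nat 18).le
end

section
/- Deleting or inserting a block of six equal digits does not change the path from the insertion point onward: if z' is obtained from z by inserting six 0s (or six 1s) starting at index n, then P_{n+6+j}(z') = P_{n+j}(z) and d_{n+6+j}(z') = d_{n+j}(z) for all j ≥ 0. In particular, the path of z is bounded iff the path of z' is bounded. -/
open Finset

/-- Insert a block of six equal digits `b` starting at position `n`. -/
def insert6 (z : ℕ → Fin 2) (n : ℕ) (b : Fin 2) : ℕ → Fin 2 :=
  fun i => if i < n then z i else if i < n + 6 then b else z (i - 6)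

theorem omega_ne_zero : ω ≠ 0 := Complex.exp_ne_zero _

theorem omega_zpow_eq_zpow_of_modEq {a b : ℤ} (h : a ≡ b [ZMOD 6]) : ω ^ a = ω ^ b := by
  rw [← div_eq_one_iff_eq (zpow_ne_zero _ omega_ne_zero), ← zpow_sub₀ omega_ne_zero,
    isPrimitiveRoot_omega.zpow_eq_one_iff_dvd]
  exact_mod_cast h.symm.dvd

def turn (b : Fin 2) : ℤ := if b = 0 then 1 else -1

theorem isPrimitiveRoot_omega_zpow_turn (b : Fin 2) : IsPrimitiveRoot (ω ^ turn b) 6 :=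
  isPrimitiveRoot_omega.zpow_of_gcd_eq_one _ (by unfold turn; split <;> rfl)

section Path

variable (d0 : ℤ) (z : ℕ → Fin 2)

theorem dir_succ (n : ℕ) : dir d0 z (n + 1) = dir d0 z n + turn (z n) := rfl

theorem pos_succ (n : ℕ) : pos d0 z (n + 1) = pos d0 z n + ω ^ dir d0 z (n + 1) := rfl

theorem pos_eq_sum (n : ℕ) : pos d0 z n = ∑ i ∈ range n, ω ^ dir d0 z (i + 1) := by
  induction n with
  | zero => rfl
  | succ n ih => rw [pos_succ, ih, sum_range_succ]

theorem dir_eq_add_dir_zero (n : ℕ) : dir d0 z n = d0 + dir 0 z n := by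
  induction n with
  | zero => simp [dir]
  | succ n ih => rw [dir_succ, dir_succ 0, ih, add_assoc]

theorem dir_modEq_dir_of_modEq {d d' : ℤ} (h : d ≡ d' [ZMOD 6]) (n : ℕ) :
    dir d z n ≡ dir d' z n [ZMOD 6] := by
  rw [dir_eq_add_dir_zero d, dir_eq_add_dir_zero d']
  exact h.add_right _

theorem pos_eq_pos_of_modEq {d d' : ℤ} (h : d ≡ d' [ZMOD 6]) : pos d z = pos d' z := by
  funext n
  simp only [pos_eq_sum, omega_zpow_eq_zpow_of_modEq (dir_modEq_dir_of_modEq z h _)]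

theorem dir_eq_dir_of_eqOn {z' : ℕ → Fin 2} {n : ℕ} (h : ∀ i < n, z i = z' i) :
    dir d0 z n = dir d0 z' n := by
  induction n with
  | zero => rfl
  | succ n ih => rw [dir_succ, dir_succ, ih fun i hi => h i (by omega), h n n.lt_succ_self]

theorem pos_eq_pos_of_eqOn {z' : ℕ → Fin 2} {n : ℕ} (h : ∀ i < n, z i = z' i) :
    pos d0 z n = pos d0 z' n := by
  simp only [pos_eq_sum]
  refine sum_congr rfl fun i hi => ?_
  rw [dir_eq_dir_of_eqOn d0 z fun k hk => h k (by simp at hi; omega)]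

theorem dir_add (m j : ℕ) : dir d0 z (m + j) = dir (dir d0 z m) (fun i => z (m + i)) j := by
  induction j with
  | zero => rfl
  | succ j ih => rw [← add_assoc, dir_succ, dir_succ, ih]

theorem pos_add (m j : ℕ) :
    pos d0 z (m + j) = pos d0 z m + pos (dir d0 z m) (fun i => z (m + i)) j := by
  induction j with
  | zero => simp [pos]
  | succ j ih => rw [← add_assoc, pos_succ, pos_succ, ih, add_assoc, add_assoc, dir_add]

theorem dir_of_forall_eq {n : ℕ} {b : Fin 2} (h : ∀ i < n, z i = b) :
    dir d0 z n = d0 + n * turn b := by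
  induction n with
  | zero => simp [dir]
  | succ n ih =>
    rw [dir_succ, ih fun i hi => h i (by omega), h n n.lt_succ_self]
    push_cast
    ring

/-- The six steps are `ω ^ (d0 + turn b)` times the sixth roots of unity `(ω ^ turn b) ^ i`. -/
theorem pos_six_of_forall_eq {b : Fin 2} (h : ∀ i < 6, z i = b) : pos d0 z 6 = 0 := by
  calc pos d0 z 6 = ∑ i ∈ range 6, ω ^ (d0 + turn b) * (ω ^ turn b) ^ i := by
        rw [pos_eq_sum]
        refine sum_congr rfl fun i hi => ?_
        rw [dir_of_forall_eq d0 z fun k hk => h k (by simp at hi; omega), ← zpow_natCast,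
          ← zpow_mul, ← zpow_add₀ omega_ne_zero]
        push_cast
        ring_nf
    _ = 0 := by
      rw [← mul_sum, (isPrimitiveRoot_omega_zpow_turn b).geom_sum_eq_zero (by norm_num), mul_zero]

end Path

theorem exists_norm_le_iff_exists_norm_add_le {E : Type*} [SeminormedAddGroup E] (f : ℕ → E)
    (m : ℕ) : (∃ M : ℝ, ∀ k, ‖f k‖ ≤ M) ↔ ∃ M : ℝ, ∀ k, ‖f (m + k)‖ ≤ M := by
  refine ⟨fun ⟨M, hM⟩ => ⟨M, fun k => hM _⟩, fun ⟨M, hM⟩ => ⟨max M (∑ i ∈ range m, ‖f i‖), ?_⟩⟩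
  intro k
  rcases lt_or_ge k m with hk | hk
  · exact le_max_of_le_right <|
      single_le_sum (f := fun i => ‖f i‖) (fun _ _ => norm_nonneg _) (mem_range.2 hk)
  · obtain ⟨j, rfl⟩ := Nat.exists_eq_add_of_le hk
    exact le_max_of_le_left (hM j)

theorem insert_six_preserves_path (d0 : ℤ) (z : ℕ → Fin 2) (n : ℕ) (b : Fin 2)
    (z' : ℕ → Fin 2) (hz' : z' = insert6 z n b) :
    (∀ j, pos d0 z' (n + 6 + j) = pos d0 z (n + j)) ∧
    (∀ j, dir d0 z' (n + 6 + j) ≡ dir d0 z (n + j) [ZMOD 6]) ∧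
    ((∃ M : ℝ, ∀ k, ‖pos d0 z k‖ ≤ M) ↔
      (∃ M : ℝ, ∀ k, ‖pos d0 z' k‖ ≤ M)) := by
  have hprefix : ∀ i < n, z' i = z i := fun i hi => by simp [hz', insert6, hi]
  have hblock : ∀ i < 6, z' (n + i) = b := fun i hi => by simp [hz', insert6, hi]
  have htail : (fun i => z' (n + 6 + i)) = fun i => z (n + i) := by
    funext i
    simp only [hz', insert6, if_neg (show ¬n + 6 + i < n by omega),
      if_neg (show ¬n + 6 + i < n + 6 by omega), show n + 6 + i - 6 = n + i by omega]
  have hdir6 : dir d0 z' (n + 6) ≡ dir d0 z n [ZMOD 6] := by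
    rw [dir_add, dir_of_forall_eq _ _ hblock, dir_eq_dir_of_eqOn d0 _ hprefix]
    exact Int.modEq_iff_dvd.2 ⟨-turn b, by push_cast; ring⟩
  have hpos6 : pos d0 z' (n + 6) = pos d0 z n := by
    rw [pos_add, pos_six_of_forall_eq _ _ hblock, add_zero, pos_eq_pos_of_eqOn d0 _ hprefix]
  have hpos : ∀ j, pos d0 z' (n + 6 + j) = pos d0 z (n + j) := fun j => by
    rw [pos_add, pos_add d0 z, hpos6, htail, pos_eq_pos_of_modEq _ hdir6]
  refine ⟨hpos, fun j => ?_, ?_⟩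
  · rw [dir_add, dir_add d0 z, htail]
    exact dir_modEq_dir_of_modEq _ hdir6 j
  · rw [exists_norm_le_iff_exists_norm_add_le (pos d0 z) n,
      exists_norm_le_iff_exists_norm_add_le (pos d0 z') (n + 6)]
    simp only [hpos]
end
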